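/- arXiv:1910.11544 — 4 statements merged into one kernel-verified Lean document; each statement's English description precedes it below -/
import Mathlib

section
/- The polynomial g(x,y,z) = (1/22)·(4 + 3(x+y+z) + 3(xy+xz+yz)) is log-concave on the positive octant ℝ³_{>0}, i.e., the function (x,y,z) ↦ log g(x,y,z) is concave on {(x,y,z) : x>0, y>0, z>0}. -/
lemma key_ineq (p0 p1 p2 u0 u1 u2 : ℝ) (h0 : 0 ≤ p0) (h1 : 0 ≤ p1) (h2 : 0 ≤ p2) :
    (3*(u0*u1+u0*u2+u1*u2)) * (4+3*(p0+p1+p2)+3*(p0*p1+p0*p2+p1*p2))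
      ≤ 2*((3/2)*((u0+u1+u2)+p0*(u1+u2)+p1*(u0+u2)+p2*(u0+u1)))^2 := by
  nlinarith [sq_nonneg (u0-u1), sq_nonneg (u0-u2), sq_nonneg (u1-u2),
    sq_nonneg u0, sq_nonneg u1, sq_nonneg u2,
    mul_nonneg h0 (sq_nonneg (2*u1+u2)), mul_nonneg h0 (sq_nonneg u2),
    mul_nonneg h1 (sq_nonneg (2*u0+u2)), mul_nonneg h1 (sq_nonneg u2),
    mul_nonneg h2 (sq_nonneg (2*u0+u1)), mul_nonneg h2 (sq_nonneg u1),
    mul_nonneg (mul_nonneg h0 h0) (sq_nonneg (u1+u2)),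
    mul_nonneg (mul_nonneg h1 h1) (sq_nonneg (u0+u2)),
    mul_nonneg (mul_nonneg h2 h2) (sq_nonneg (u0+u1)),
    mul_nonneg (mul_nonneg h1 h2) (sq_nonneg u0),
    mul_nonneg (mul_nonneg h0 h2) (sq_nonneg u1),
    mul_nonneg (mul_nonneg h0 h1) (sq_nonneg u2)]

lemma Qpos (a b c : ℝ) (ha : 0 < a) (hb : 0 < b) (hc : 0 < c) :
    0 < 4 + 3*(a+b+c) + 3*(a*b+a*c+b*c) := by positivity

lemma logquad_concave (A B C : ℝ)
    (hpos : ∀ t ∈ Set.Icc (0:ℝ) 1, 0 < A + B*t + C*t^2)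
    (hkey : ∀ t ∈ Set.Icc (0:ℝ) 1, 2*C*(A + B*t + C*t^2) ≤ (B + 2*C*t)^2) :
    ConcaveOn ℝ (Set.Icc (0:ℝ) 1) (fun t => Real.log (A + B*t + C*t^2)) := by
  have hq : ∀ t : ℝ, HasDerivAt (fun s : ℝ => A + B*s + C*s^2) (B + 2*C*t) t := by
    intro t
    have h1 : HasDerivAt (fun s : ℝ => A + B*s + C*s^2) (0 + B*1 + C*((2:ℕ)*t^(2-1))) t :=
      ((hasDerivAt_const t A).add ((hasDerivAt_id t).const_mul B)).add
        ((hasDerivAt_pow 2 t).const_mul C)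
    convert h1 using 1
    push_cast
    ring
  apply concaveOn_of_hasDerivWithinAt2_nonpos (convex_Icc 0 1)
    (f' := fun t => (B + 2*C*t) / (A + B*t + C*t^2))
    (f'' := fun t => ((2*C)*(A + B*t + C*t^2) - (B + 2*C*t)*(B + 2*C*t)) / (A + B*t + C*t^2)^2)
  · exact ContinuousOn.log (Continuous.continuousOn (by continuity))
      (fun t ht => (hpos t ht).ne')
  · intro t ht
    rw [interior_Icc] at ht
    exact ((hq t).log (hpos t (Set.mem_Icc_of_Ioo ht)).ne').hasDerivWithinAt
  · intro t ht
    rw [interior_Icc] at ht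
    have hne := (hpos t (Set.mem_Icc_of_Ioo ht)).ne'
    have h1 : HasDerivAt (fun s : ℝ => B + 2*C*s) (2*C) t := by
      simpa using ((hasDerivAt_id t).const_mul (2*C)).const_add B
    exact (h1.div (hq t) hne).hasDerivWithinAt
  · intro t ht
    rw [interior_Icc] at ht
    have htI := Set.mem_Icc_of_Ioo ht
    apply div_nonpos_of_nonpos_of_nonneg _ (sq_nonneg _)
    nlinarith [hkey t htI]

set_option maxHeartbeats 1000000 in
theorem stmt_1 :
    ConcaveOn ℝ {v : Fin 3 → ℝ | ∀ i, 0 < v i}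
      (fun v : Fin 3 → ℝ => Real.log ((1/22) *
        (4 + 3*(v 0 + v 1 + v 2) + 3*(v 0 * v 1 + v 0 * v 2 + v 1 * v 2)))) := by
  constructor
  · have h : {v : Fin 3 → ℝ | ∀ i, 0 < v i}
        = Set.pi Set.univ (fun _ : Fin 3 => Set.Ioi (0:ℝ)) := by
      ext v; simp [Set.mem_pi, Set.mem_Ioi]
    rw [h]
    exact convex_pi (fun i _ => convex_Ioi 0)
  · intro x hx y hy a b ha hb hab
    simp only [Set.mem_setOf_eq] at hx hy
    have hb1 : b ≤ 1 := by linarith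
    have hba : a = 1 - b := by linarith
    subst hba
    set A : ℝ := 4 + 3*(x 0 + x 1 + x 2) + 3*(x 0 * x 1 + x 0 * x 2 + x 1 * x 2) with hA
    set Bc : ℝ := 3*((y 0 - x 0)+(y 1 - x 1)+(y 2 - x 2))
      + 3*(x 0*((y 1 - x 1)+(y 2 - x 2)) + x 1*((y 0 - x 0)+(y 2 - x 2))
          + x 2*((y 0 - x 0)+(y 1 - x 1))) with hBc
    set C : ℝ := 3*((y 0 - x 0)*(y 1 - x 1)+(y 0 - x 0)*(y 2 - x 2)
          +(y 1 - x 1)*(y 2 - x 2)) with hC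
    have hval : ∀ t : ℝ, A + Bc*t + C*t^2
        = 4 + 3*(((1-t)*x 0 + t*y 0) + ((1-t)*x 1 + t*y 1) + ((1-t)*x 2 + t*y 2))
          + 3*(((1-t)*x 0 + t*y 0)*((1-t)*x 1 + t*y 1)
              + ((1-t)*x 0 + t*y 0)*((1-t)*x 2 + t*y 2)
              + ((1-t)*x 1 + t*y 1)*((1-t)*x 2 + t*y 2)) := by
      intro t; simp only [hA, hBc, hC]; ring
    have hcoord : ∀ t ∈ Set.Icc (0:ℝ) 1, ∀ i, 0 < (1-t)*x i + t*y i := by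
      intro t ht i
      nlinarith [hx i, hy i, ht.1, ht.2, mul_nonneg ht.1 (hy i).le,
        mul_nonneg (by linarith [ht.2] : (0:ℝ) ≤ 1 - t) (hx i).le]
    have hpos : ∀ t ∈ Set.Icc (0:ℝ) 1, 0 < A + Bc*t + C*t^2 := by
      intro t ht
      rw [hval t]
      exact Qpos _ _ _ (hcoord t ht 0) (hcoord t ht 1) (hcoord t ht 2)
    have hkey : ∀ t ∈ Set.Icc (0:ℝ) 1, 2*C*(A + Bc*t + C*t^2) ≤ (Bc + 2*C*t)^2 := by
      intro t ht
      have hk := key_ineq ((1-t)*x 0 + t*y 0) ((1-t)*x 1 + t*y 1) ((1-t)*x 2 + t*y 2)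
        (y 0 - x 0) (y 1 - x 1) (y 2 - x 2)
        (hcoord t ht 0).le (hcoord t ht 1).le (hcoord t ht 2).le
      rw [hval t]
      have hBt : Bc + 2*C*t
          = 2*((3/2)*(((y 0 - x 0)+(y 1 - x 1)+(y 2 - x 2))
            + ((1-t)*x 0 + t*y 0)*((y 1 - x 1)+(y 2 - x 2))
            + ((1-t)*x 1 + t*y 1)*((y 0 - x 0)+(y 2 - x 2))
            + ((1-t)*x 2 + t*y 2)*((y 0 - x 0)+(y 1 - x 1)))) := by
        simp only [hBc, hC]; ring
      have hCu : C = 3*((y 0 - x 0)*(y 1 - x 1)+(y 0 - x 0)*(y 2 - x 2)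
          +(y 1 - x 1)*(y 2 - x 2)) := hC
      rw [hBt, hCu]
      linarith [hk]
    have hconc := logquad_concave A Bc C hpos hkey
    have h01 : (0:ℝ) ∈ Set.Icc (0:ℝ) 1 := by norm_num
    have h11 : (1:ℝ) ∈ Set.Icc (0:ℝ) 1 := by norm_num
    have hres := hconc.2 h01 h11 ha hb hab
    simp only [smul_eq_mul, mul_zero, mul_one, zero_add] at hres
    norm_num at hres
    -- hres : (1-b) * log A + b * log (A + Bc + C) ≤ log (A + Bc*b + C*b^2)
    have hxpos := Qpos (x 0) (x 1) (x 2) (hx 0) (hx 1) (hx 2)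
    have hypos := Qpos (y 0) (y 1) (y 2) (hy 0) (hy 1) (hy 2)
    have hmidpos : 0 < A + Bc*b + C*b^2 := hpos b ⟨hb, hb1⟩
    have hq1 : A + Bc*1 + C*1^2
        = 4 + 3*(y 0 + y 1 + y 2) + 3*(y 0 * y 1 + y 0 * y 2 + y 1 * y 2) := by
      rw [hval 1]; ring
    simp only [Pi.add_apply, Pi.smul_apply, smul_eq_mul]
    have hmid : A + Bc*b + C*b^2
        = 4 + 3*(((1-b)*x 0 + b*y 0) + ((1-b)*x 1 + b*y 1) + ((1-b)*x 2 + b*y 2))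
          + 3*(((1-b)*x 0 + b*y 0)*((1-b)*x 1 + b*y 1)
              + ((1-b)*x 0 + b*y 0)*((1-b)*x 2 + b*y 2)
              + ((1-b)*x 1 + b*y 1)*((1-b)*x 2 + b*y 2)) := hval b
    rw [Real.log_mul (by norm_num : (1/22:ℝ) ≠ 0) hxpos.ne',
        Real.log_mul (by norm_num : (1/22:ℝ) ≠ 0) hypos.ne',
        Real.log_mul (by norm_num : (1/22:ℝ) ≠ 0) (by rw [← hmid]; exact hmidpos.ne')]
    have e1 : Real.log (A + Bc + C)
        = Real.log (4 + 3*(y 0 + y 1 + y 2) + 3*(y 0 * y 1 + y 0 * y 2 + y 1 * y 2)) := by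
      rw [← hq1]; ring_nf
    have eb : Real.log (A + Bc*b + C*b^2)
        = Real.log (4 + 3*(((1-b)*x 0 + b*y 0) + ((1-b)*x 1 + b*y 1) + ((1-b)*x 2 + b*y 2))
          + 3*(((1-b)*x 0 + b*y 0)*((1-b)*x 1 + b*y 1)
              + ((1-b)*x 0 + b*y 0)*((1-b)*x 2 + b*y 2)
              + ((1-b)*x 1 + b*y 1)*((1-b)*x 2 + b*y 2))) := by rw [← hmid]
    rw [e1, eb] at hres
    simp only [hA] at hres
    linarith [hres]
end

section
/- For all x, y, z > 0, the 3×3 symmetric matrix R with diagonal entries R₁₁ = 3(y+z+1)², R₂₂ = 3(x+z+1)², R₃₃ = 3(x+y+1)², and off-diagonal entries R₁₂ = R₂₁ = 3z²+3z−1, R₁₃ = R₃₁ = 3y²+3y−1, R₂₃ = R₃₂ = 3x²+3x−1, is strictly diagonally dominant with positive diagonal, hence positive definite. -/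
/-!
A Hermitian matrix is positive definite as soon as all its eigenvalues are positive. By
Gershgorin's circle theorem every eigenvalue `μ` satisfies `|μ - Aₖₖ| ≤ ∑_{j ≠ k} |Aₖⱼ| < Aₖₖ`
for some `k`, so `μ > 0` when the diagonal is positive and strictly dominant. For the matrix at
hand, dominance follows from `|3t² + 3t - 1| ≤ 3t² + 3t + 1` for `t ≥ 0`.
-/

open Finset
open scoped ComplexOrder

theorem Matrix.IsHermitian.posDef_of_sum_row_lt_diag {𝕜 n : Type*} [RCLike 𝕜] [Fintype n]
    [DecidableEq n] {A : Matrix n n 𝕜} (hA : A.IsHermitian) (hdiag : ∀ i, 0 < A i i)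
    (hdom : ∀ i, ∑ j ∈ univ.erase i, ‖A i j‖ < ‖A i i‖) : A.PosDef := by
  refine hA.posDef_iff_eigenvalues_pos.mpr fun i => ?_
  have hμ : Module.End.HasEigenvalue (Matrix.toLin' A) (hA.eigenvalues i : 𝕜) := by
    rw [Module.End.hasEigenvalue_iff_mem_spectrum, Matrix.spectrum_toLin']
    exact spectrum.algebraMap_mem 𝕜 (hA.eigenvalues_mem_spectrum_real i)
  obtain ⟨k, hk⟩ := eigenvalue_mem_ball hμ
  rw [mem_closedBall_iff_norm'] at hk
  have hre : RCLike.re (A k k) = ‖A k k‖ := by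
    simpa using congrArg RCLike.re (RCLike.norm_of_nonneg' (hdiag k).le).symm
  have hgap := (RCLike.re_le_norm _).trans_lt (hk.trans_lt (hdom k))
  rw [map_sub, hre, RCLike.ofReal_re] at hgap
  linarith

theorem abs_add_abs_lt_three_mul_add_add_one_sq {a b : ℝ} (ha : 0 ≤ a) (hb : 0 ≤ b) :
    |3*a^2+3*a-1| + |3*b^2+3*b-1| < 3*(a+b+1)^2 := by
  have habs (t : ℝ) (ht : 0 ≤ t) : |3*t^2+3*t-1| ≤ 3*t^2+3*t+1 :=
    abs_le.mpr ⟨by nlinarith, by linarith⟩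
  nlinarith [habs a ha, habs b hb, mul_nonneg ha hb]

theorem stmt_2 (x y z : ℝ) (hx : 0 < x) (hy : 0 < y) (hz : 0 < z) :
    let R : Matrix (Fin 3) (Fin 3) ℝ :=
      !![3*(y+z+1)^2, 3*z^2+3*z-1, 3*y^2+3*y-1;
         3*z^2+3*z-1, 3*(x+z+1)^2, 3*x^2+3*x-1;
         3*y^2+3*y-1, 3*x^2+3*x-1, 3*(x+y+1)^2]
    (∀ i, 0 < R i i ∧ ∑ j ∈ Finset.univ.erase i, |R i j| < |R i i|) ∧ R.PosDef := by
  intro R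
  have hR : R.IsHermitian := by
    ext i j
    fin_cases i <;> fin_cases j <;> simp [R]
  have hdiag : ∀ i, 0 < R i i := by
    intro i
    fin_cases i <;> simp [R] <;> positivity
  have hdom : ∀ i, ∑ j ∈ univ.erase i, |R i j| < |R i i| := by
    intro i
    rw [abs_of_pos (hdiag i), sum_erase_eq_sub (mem_univ i), Fin.sum_univ_three]
    fin_cases i <;>
      simp only [R, Fin.zero_eta, Fin.mk_one, Fin.reduceFinMk, Fin.isValue, Matrix.of_apply,
        Matrix.cons_val', Matrix.cons_val_zero, Matrix.cons_val_one, Matrix.cons_val,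
        Matrix.cons_val_fin_one, abs_mul, Nat.abs_ofNat, abs_pow, sq_abs]
    · linarith [abs_add_abs_lt_three_mul_add_add_one_sq hz.le hy.le]
    · linarith [abs_add_abs_lt_three_mul_add_add_one_sq hz.le hx.le]
    · linarith [abs_add_abs_lt_three_mul_add_add_one_sq hy.le hx.le]
  exact ⟨fun i => ⟨hdiag i, hdom i⟩, hR.posDef_of_sum_row_lt_diag hdiag hdom⟩
end

section
/- The polynomial g(x,y,z) = (1/22)(4 + 3(x+y+z) + 3(xy+xz+yz)) is strongly log-concave: g and all its iterated partial derivatives ∂_{x_{i₁}}⋯∂_{x_{i_k}} g (for any k ≥ 0 and indices i₁,…,i_k ∈ {1,2,3}) are log-concave on ℝ³_{>0} (where a function that is identically zero or nonpositive is considered trivially log-concave). -/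
noncomputable def pderiv7 (i : Fin 3) (f : (Fin 3 → ℝ) → ℝ) : (Fin 3 → ℝ) → ℝ :=
  fun v => fderiv ℝ f v (Pi.single i 1)

noncomputable def g7 (v : Fin 3 → ℝ) : ℝ :=
  (1/22) * (4 + 3*(v 0 + v 1 + v 2) + 3*(v 0 * v 1 + v 0 * v 2 + v 1 * v 2))

/-!
Along a line, `g7` is a quadratic `q`, and `log q` is concave wherever `q q'' ≤ q' ^ 2`; on the
closed positive orthant this is a polynomial inequality between `g7`, its directional derivative and
its quadratic part, which has a sum-of-squares certificate. The first partial derivatives of `g7`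
are affine and positive on the orthant, hence log-concave, and all higher ones are constant.
-/

open Set

lemma convex_pos_orthant {ι : Type*} : Convex ℝ {v : ι → ℝ | ∀ i, 0 < v i} :=
  fun _ hx _ hy _ _ ha hb hab i ↦ convex_Ioi (0 : ℝ) (hx i) (hy i) ha hb hab

theorem ConcaveOn.log {E : Type*} [AddCommGroup E] [Module ℝ E] {s : Set E} {f : E → ℝ}
    (hf : ConcaveOn ℝ s f) (hpos : ∀ x ∈ s, 0 < f x) : ConcaveOn ℝ s fun x ↦ Real.log (f x) :=
  ⟨hf.1, fun x hx y hy _ _ ha hb hab ↦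
    (strictConcaveOn_log_Ioi.concaveOn.2 (hpos x hx) (hpos y hy) ha hb hab).trans <|
      Real.log_le_log (convex_Ioi (0 : ℝ) (hpos x hx) (hpos y hy) ha hb hab) (hf.2 hx hy ha hb hab)⟩

theorem concaveOn_of_concaveOn_lineMap {E : Type*} [AddCommGroup E] [Module ℝ E] {s : Set E}
    (hs : Convex ℝ s) {f : E → ℝ}
    (hf : ∀ x ∈ s, ∀ y ∈ s, ConcaveOn ℝ (Icc (0 : ℝ) 1) fun t ↦ f (AffineMap.lineMap x y t)) :
    ConcaveOn ℝ s f := by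
  refine ⟨hs, fun x hx y hy a b ha hb hab ↦ ?_⟩
  have h := (hf x hx y hy).2 (left_mem_Icc.2 (zero_le_one' ℝ)) (right_mem_Icc.2 (zero_le_one' ℝ))
    ha hb hab
  simp only [smul_eq_mul, mul_zero, mul_one, zero_add, AffineMap.lineMap_apply_zero,
    AffineMap.lineMap_apply_one] at h
  rwa [AffineMap.lineMap_apply_module, ← eq_sub_of_add_eq hab] at h

theorem concaveOn_log_quadratic {s : Set ℝ} (hs : Convex ℝ s) {a b c : ℝ}
    (hpos : ∀ t ∈ s, 0 < a * t ^ 2 + b * t + c)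
    (hdisc : ∀ t ∈ s, 2 * a * (a * t ^ 2 + b * t + c) ≤ (2 * a * t + b) ^ 2) :
    ConcaveOn ℝ s fun t ↦ Real.log (a * t ^ 2 + b * t + c) := by
  set q : ℝ → ℝ := fun t ↦ a * t ^ 2 + b * t + c
  have hq : ∀ t, HasDerivAt q (2 * a * t + b) t := fun t ↦
    (((hasDerivAt_pow 2 t).const_mul a).add ((hasDerivAt_id t).const_mul b)).add_const c
      |>.congr_deriv (by norm_num; ring)
  have hq' : ∀ t, HasDerivAt (fun t ↦ 2 * a * t + b) (2 * a) t := fun t ↦ by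
    simpa using ((hasDerivAt_id t).const_mul (2 * a)).add_const b
  have hsub : interior s ⊆ s := interior_subset
  refine concaveOn_of_hasDerivWithinAt2_nonpos (f' := fun t ↦ (2 * a * t + b) / q t)
    (f'' := fun t ↦ (2 * a * q t - (2 * a * t + b) ^ 2) / q t ^ 2) hs
    (ContinuousOn.log (by fun_prop) fun t ht ↦ (hpos t ht).ne') (fun t ht ↦ ?_) (fun t ht ↦ ?_)
    fun t ht ↦ div_nonpos_of_nonpos_of_nonneg (sub_nonpos.2 (hdisc t (hsub ht))) (sq_nonneg _)
  · simpa [div_eq_inv_mul] using ((hq t).log (hpos t (hsub ht)).ne').hasDerivWithinAt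
  · exact ((hq' t).div (hq t) (hpos t (hsub ht)).ne').hasDerivWithinAt.congr_deriv (by ring)

noncomputable def g7QuadForm (d : Fin 3 → ℝ) : ℝ :=
  3/22 * (d 0 * d 1 + d 0 * d 2 + d 1 * d 2)

noncomputable def g7DirDeriv (p d : Fin 3 → ℝ) : ℝ :=
  3/22 * (d 0 + d 1 + d 2 + d 0 * (p 1 + p 2) + d 1 * (p 0 + p 2) + d 2 * (p 0 + p 1))

lemma g7_smul_add (p d : Fin 3 → ℝ) (t : ℝ) :
    g7 (t • d + p) = g7QuadForm d * t ^ 2 + g7DirDeriv p d * t + g7 p := by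
  simp only [g7, g7QuadForm, g7DirDeriv, Pi.add_apply, Pi.smul_apply, smul_eq_mul]
  ring

lemma g7DirDeriv_smul_add (p d : Fin 3 → ℝ) (t : ℝ) :
    g7DirDeriv (t • d + p) d = 2 * g7QuadForm d * t + g7DirDeriv p d := by
  simp only [g7QuadForm, g7DirDeriv, Pi.add_apply, Pi.smul_apply, smul_eq_mul]
  ring

lemma g7_pos {p : Fin 3 → ℝ} (hp : ∀ i, 0 ≤ p i) : 0 < g7 p := by
  have := hp 0; have := hp 1; have := hp 2
  unfold g7; positivity

lemma two_mul_g7QuadForm_mul_g7_le {p : Fin 3 → ℝ} (hp : ∀ i, 0 ≤ p i) (d : Fin 3 → ℝ) :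
    2 * g7QuadForm d * g7 p ≤ g7DirDeriv p d ^ 2 := by
  have h0 := hp 0; have h1 := hp 1; have h2 := hp 2
  simp only [g7, g7QuadForm, g7DirDeriv]
  nlinarith [sq_nonneg (d 0 - d 1), sq_nonneg (d 0 - d 2), sq_nonneg (d 1 - d 2),
    mul_nonneg h0 (sq_nonneg (d 1 + d 2)), mul_nonneg h1 (sq_nonneg (d 0 + d 2)),
    mul_nonneg h2 (sq_nonneg (d 0 + d 1)),
    mul_nonneg (mul_nonneg h0 h0) (sq_nonneg (d 1 + d 2)),
    mul_nonneg (mul_nonneg h1 h1) (sq_nonneg (d 0 + d 2)),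
    mul_nonneg (mul_nonneg h2 h2) (sq_nonneg (d 0 + d 1)),
    mul_nonneg (mul_nonneg h1 h2) (sq_nonneg (d 0)),
    mul_nonneg (mul_nonneg h0 h2) (sq_nonneg (d 1)),
    mul_nonneg (mul_nonneg h0 h1) (sq_nonneg (d 2))]

theorem concaveOn_log_g7 : ConcaveOn ℝ {v : Fin 3 → ℝ | ∀ i, 0 < v i} fun v ↦ Real.log (g7 v) := by
  refine concaveOn_of_concaveOn_lineMap convex_pos_orthant fun x hx y hy ↦ ?_
  have hmem : ∀ t ∈ Icc (0:ℝ) 1, ∀ i, 0 ≤ (t • (y - x) + x) i := fun t ht i ↦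
    (convex_pos_orthant.lineMap_mem hx hy ht i).le
  simp only [AffineMap.lineMap_apply_module', g7_smul_add]
  refine concaveOn_log_quadratic (convex_Icc 0 1) (fun t ht ↦ ?_) fun t ht ↦ ?_
  · rw [← g7_smul_add]; exact g7_pos (hmem t ht)
  · rw [← g7_smul_add, ← g7DirDeriv_smul_add]
    exact two_mul_g7QuadForm_mul_g7_le (hmem t ht) _

lemma pderiv7_g7 (i : Fin 3) : pderiv7 i g7 = fun v ↦ g7DirDeriv v (Pi.single i 1) := by
  funext v
  have hc (j : Fin 3) := hasFDerivAt_apply (𝕜 := ℝ) j v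
  have hg : HasFDerivAt g7 _ v :=
    (((((hc 0).add (hc 1)).add (hc 2)).const_mul 3).const_add 4 |>.add
      ((((hc 0).mul (hc 1)).add ((hc 0).mul (hc 2))).add ((hc 1).mul (hc 2)) |>.const_mul 3))
      |>.const_mul (1/22)
  rw [pderiv7, hg.fderiv]
  fin_cases i <;> simp [g7DirDeriv] <;> ring

lemma pderiv7_g7DirDeriv (d : Fin 3 → ℝ) (j : Fin 3) :
    pderiv7 j (fun v ↦ g7DirDeriv v d) = fun _ ↦ 3/22 * (d 0 + d 1 + d 2 - d j) := by
  funext v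
  have hc (j : Fin 3) := hasFDerivAt_apply (𝕜 := ℝ) j v
  have hg : HasFDerivAt (fun v ↦ g7DirDeriv v d) _ v :=
    (((((hc 1).add (hc 2)).const_mul (d 0)).const_add (d 0 + d 1 + d 2) |>.add
      (((hc 0).add (hc 2)).const_mul (d 1))).add (((hc 0).add (hc 1)).const_mul (d 2))).const_mul
      (3/22)
  rw [pderiv7, hg.fderiv]
  fin_cases j <;> simp <;> ring

lemma pderiv7_const (j : Fin 3) (c : ℝ) : pderiv7 j (fun _ ↦ c) = fun _ ↦ 0 := by
  funext v
  simp [pderiv7]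

lemma exists_foldr_pderiv7_g7_eq_const (j i : Fin 3) :
    ∀ t : List (Fin 3), ∃ c : ℝ, (j :: i :: t).foldr pderiv7 g7 = fun _ ↦ c
  | [] => ⟨_, by
    rw [List.foldr_cons, List.foldr_cons, List.foldr_nil, pderiv7_g7, pderiv7_g7DirDeriv]⟩
  | k :: t =>
    have ⟨c, hc⟩ := exists_foldr_pderiv7_g7_eq_const i k t
    ⟨0, by rw [List.foldr_cons, hc, pderiv7_const]⟩

lemma concaveOn_g7DirDeriv {s : Set (Fin 3 → ℝ)} (hs : Convex ℝ s) (d : Fin 3 → ℝ) :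
    ConcaveOn ℝ s fun v ↦ g7DirDeriv v d := by
  refine ⟨hs, fun x _ y _ a b _ _ hab ↦ le_of_eq ?_⟩
  simp only [g7DirDeriv, Pi.add_apply, Pi.smul_apply, smul_eq_mul]
  linear_combination (3/22 * (d 0 + d 1 + d 2)) * hab

lemma g7DirDeriv_single_pos {p : Fin 3 → ℝ} (hp : ∀ i, 0 ≤ p i) (i : Fin 3) :
    0 < g7DirDeriv p (Pi.single i 1) := by
  have := hp 0; have := hp 1; have := hp 2
  fin_cases i <;> simp [g7DirDeriv] <;> positivity

theorem stmt_7 :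
    ∀ l : List (Fin 3),
      ConcaveOn ℝ {v : Fin 3 → ℝ | ∀ i, 0 < v i}
        (fun v => Real.log ((l.foldr pderiv7 g7) v)) := by
  intro l
  match l with
  | [] => exact concaveOn_log_g7
  | [i] =>
    rw [List.foldr_cons, List.foldr_nil, pderiv7_g7]
    exact (concaveOn_g7DirDeriv convex_pos_orthant _).log fun v hv ↦
      g7DirDeriv_single_pos (fun j ↦ (hv j).le) i
  | j :: i :: t =>
    obtain ⟨c, hc⟩ := exists_foldr_pderiv7_g7_eq_const j i t
    rw [hc]
    exact concaveOn_const _ convex_pos_orthant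
end

section
/- There exists a probability distribution p on subsets of a 3-element ground set whose generating polynomial is strongly log-concave but which is not log-submodular; hence strong log-concavity does not imply log-submodularity. -/
noncomputable def pderiv8 (i : Fin 3) (f : (Fin 3 → ℝ) → ℝ) : (Fin 3 → ℝ) → ℝ :=
  fun v => fderiv ℝ f v (Pi.single i 1)

noncomputable def genPoly8 (p : Finset (Fin 3) → ℝ) (v : Fin 3 → ℝ) : ℝ :=
  ∑ S : Finset (Fin 3), p S * ∏ i ∈ S, v i

/-
Take `p ∅ = 1/3` and `p S = 2/9` for the nonempty `S ⊆ {0, 1}`, with generating polynomial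
`1/3 + 2/9 (x₀ + x₁ + x₀x₁)`. It is not log-submodular: `p {0,1} p ∅ = 6/81 > 4/81 = p {0} p {1}`.

A polynomial `f = a + b x₀ + c x₁ + d x₀x₁` with nonnegative coefficients and `ad ≤ 2bc` (where
log-submodularity would ask for `ad ≤ bc`) is log-concave on the positive orthant: restricted to a
line it is a quadratic `q` with `q q'' ≤ q'²`, which follows from `d f ≤ 2 ∂₀f ∂₁f`. Its partial
derivatives are again of this form, so every iterated derivative of the example is log-concave.
-/

open Real Set AffineMap

theorem concaveOn_of_forall_comp_lineMap {E : Type*} [AddCommGroup E] [Module ℝ E] {s : Set E}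
    {f : E → ℝ} (hs : Convex ℝ s)
    (h : ∀ x ∈ s, ∀ y ∈ s, ConcaveOn ℝ (Icc (0 : ℝ) 1) (fun t => f (lineMap y x t))) :
    ConcaveOn ℝ s f := by
  refine ⟨hs, fun x hx y hy a b ha hb hab => ?_⟩
  have := (h x hx y hy).2 (right_mem_Icc.2 zero_le_one) (left_mem_Icc.2 zero_le_one) ha hb hab
  obtain rfl : b = 1 - a := by linarith
  simpa [lineMap_apply_module, add_comm] using this

theorem concaveOn_log_of_mul_deriv2_le_sq {I : Set ℝ} (hI : Convex ℝ I) {f f' f'' : ℝ → ℝ}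
    (hf' : ∀ t, HasDerivAt f (f' t) t) (hf'' : ∀ t, HasDerivAt f' (f'' t) t)
    (hpos : ∀ t ∈ I, 0 < f t) (h : ∀ t ∈ I, f t * f'' t ≤ f' t ^ 2) :
    ConcaveOn ℝ I (fun t => log (f t)) := by
  refine concaveOn_of_hasDerivWithinAt2_nonpos (f' := fun t => f' t / f t)
    (f'' := fun t => (f'' t * f t - f' t * f' t) / f t ^ 2) hI
    (fun t ht => ((hf' t).continuousAt.log (hpos t ht).ne').continuousWithinAt)
    (fun t ht => ((hf' t).log (hpos t (interior_subset ht)).ne').hasDerivWithinAt)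
    (fun t ht => ((hf'' t).div (hf' t) (hpos t (interior_subset ht)).ne').hasDerivWithinAt)
    (fun t ht => div_nonpos_of_nonpos_of_nonneg ?_ (sq_nonneg _))
  have := h t (interior_subset ht)
  nlinarith

theorem two_mul_mul_le_sq_of_le {k A B p q : ℝ} (hk : 0 ≤ k) (hkAB : k ≤ 2 * A * B) :
    2 * k * (p * q) ≤ (A * p + B * q) ^ 2 := by
  rcases le_total 0 (p * q) with hpq | hpq
  · nlinarith [sq_nonneg (A * p - B * q), mul_le_mul_of_nonneg_right hkAB hpq]
  · nlinarith [mul_nonneg hk (neg_nonneg.2 hpq), sq_nonneg (A * p + B * q)]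

theorem convex_setOf_forall_pos (ι : Type*) : Convex ℝ {v : ι → ℝ | ∀ i, 0 < v i} := by
  simpa [Set.pi] using convex_pi (s := univ) fun i _ => convex_Ioi (0 : ℝ)

def multiaffine01 (a b c d : ℝ) (v : Fin 3 → ℝ) : ℝ := a + b * v 0 + c * v 1 + d * (v 0 * v 1)

theorem hasFDerivAt_multiaffine01 (a b c d : ℝ) (v : Fin 3 → ℝ) :
    HasFDerivAt (multiaffine01 a b c d)
      ((b + d * v 1) • ContinuousLinearMap.proj (R := ℝ) (φ := fun _ : Fin 3 => ℝ) 0 +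
        (c + d * v 0) • ContinuousLinearMap.proj (R := ℝ) (φ := fun _ : Fin 3 => ℝ) 1) v := by
  have h0 := hasFDerivAt_apply (𝕜 := ℝ) 0 v
  have h1 := hasFDerivAt_apply (𝕜 := ℝ) 1 v
  refine ((((h0.const_mul b).const_add a).add (h1.const_mul c)).add
    ((h0.mul h1).const_mul d)).congr_fderiv ?_
  ext w
  simp only [add_apply, smul_apply, ContinuousLinearMap.proj_apply, smul_eq_mul]
  ring

theorem pderiv8_multiaffine01 (i : Fin 3) (a b c d : ℝ) :
    pderiv8 i (multiaffine01 a b c d) =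
      multiaffine01 (b * (Pi.single i 1 : Fin 3 → ℝ) 0 + c * (Pi.single i 1 : Fin 3 → ℝ) 1)
        (d * (Pi.single i 1 : Fin 3 → ℝ) 1) (d * (Pi.single i 1 : Fin 3 → ℝ) 0) 0 := by
  funext v
  rw [pderiv8, (hasFDerivAt_multiaffine01 a b c d v).fderiv, multiaffine01]
  simp only [add_apply, smul_apply, ContinuousLinearMap.proj_apply, smul_eq_mul]
  ring

theorem mul_multiaffine01_le_two_mul {a b c d : ℝ} (hb : 0 ≤ b) (hc : 0 ≤ c) (hd : 0 ≤ d)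
    (h : a * d ≤ 2 * b * c) {v : Fin 3 → ℝ} (hv0 : 0 ≤ v 0) (hv1 : 0 ≤ v 1) :
    d * multiaffine01 a b c d v ≤ 2 * (b + d * v 1) * (c + d * v 0) := by
  unfold multiaffine01
  nlinarith [mul_nonneg (mul_nonneg hb hd) hv0, mul_nonneg (mul_nonneg hc hd) hv1,
    mul_nonneg (mul_nonneg hd hd) (mul_nonneg hv0 hv1)]

theorem multiaffine01_pos {a b c d : ℝ} (ha : 0 ≤ a) (hb : 0 ≤ b) (hc : 0 ≤ c) (hd : 0 ≤ d)
    (hsum : 0 < a + b + c + d) {v : Fin 3 → ℝ} (hv : ∀ i, 0 < v i) :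
    0 < multiaffine01 a b c d v := by
  have h0 := hv 0
  have h1 := hv 1
  have : 0 < a ∨ 0 < b ∨ 0 < c ∨ 0 < d := by
    by_contra! h
    linarith
  unfold multiaffine01
  rcases this with h | h | h | h <;> positivity

theorem concaveOn_log_multiaffine01 {a b c d : ℝ} (ha : 0 ≤ a) (hb : 0 ≤ b) (hc : 0 ≤ c)
    (hd : 0 ≤ d) (h : a * d ≤ 2 * b * c) :
    ConcaveOn ℝ {v : Fin 3 → ℝ | ∀ i, 0 < v i} (fun v => log (multiaffine01 a b c d v)) := by
  rcases (add_nonneg (add_nonneg (add_nonneg ha hb) hc) hd).eq_or_lt with hzero | hpos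
  · obtain ⟨rfl, rfl, rfl, rfl⟩ : a = 0 ∧ b = 0 ∧ c = 0 ∧ d = 0 := by
      refine ⟨?_, ?_, ?_, ?_⟩ <;> linarith
    simp only [multiaffine01, zero_mul, add_zero]
    exact concaveOn_const _ (convex_setOf_forall_pos (Fin 3))
  refine concaveOn_of_forall_comp_lineMap (convex_setOf_forall_pos (Fin 3)) fun x hx y hy => ?_
  have hmem : ∀ t ∈ Icc (0 : ℝ) 1, lineMap y x t ∈ {v : Fin 3 → ℝ | ∀ i, 0 < v i} :=
    fun t ht => (convex_setOf_forall_pos (Fin 3)).lineMap_mem hy hx ht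
  have hline : ∀ t : ℝ, HasDerivAt (lineMap y x) (x - y) t := fun t => hasDerivAt_lineMap
  have hcoord : ∀ i t, HasDerivAt (fun t : ℝ => lineMap y x t i) (x i - y i) t :=
    fun i t => hasDerivAt_pi.1 (hline t) i
  refine concaveOn_log_of_mul_deriv2_le_sq (convex_Icc 0 1)
    (f' := fun t =>
      (b + d * lineMap y x t 1) * (x 0 - y 0) + (c + d * lineMap y x t 0) * (x 1 - y 1))
    (f'' := fun _ => 2 * d * ((x 0 - y 0) * (x 1 - y 1))) (fun t => ?_) (fun t => ?_)
    (fun t ht => multiaffine01_pos ha hb hc hd hpos (hmem t ht)) (fun t ht => ?_)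
  · refine ((hasFDerivAt_multiaffine01 a b c d _).comp_hasDerivAt t (hline t)).congr_deriv ?_
    simp
  · refine ((((hcoord 1 t).const_mul d).const_add b).mul_const _).add
      ((((hcoord 0 t).const_mul d).const_add c).mul_const _) |>.congr_deriv ?_
    ring
  · have hv := hmem t ht
    calc multiaffine01 a b c d (lineMap y x t) * (2 * d * ((x 0 - y 0) * (x 1 - y 1)))
        = 2 * (d * multiaffine01 a b c d (lineMap y x t)) * ((x 0 - y 0) * (x 1 - y 1)) := by ring
      _ ≤ _ := two_mul_mul_le_sq_of_le (mul_nonneg hd (multiaffine01_pos ha hb hc hd hpos hv).le)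
          (mul_multiaffine01_le_two_mul hb hc hd h (hv 0).le (hv 1).le)

def IsSLCMultiaffine01 (f : (Fin 3 → ℝ) → ℝ) : Prop :=
  ∃ a b c d : ℝ, 0 ≤ a ∧ 0 ≤ b ∧ 0 ≤ c ∧ 0 ≤ d ∧ a * d ≤ 2 * b * c ∧ f = multiaffine01 a b c d

theorem IsSLCMultiaffine01.pderiv8 {f : (Fin 3 → ℝ) → ℝ} (hf : IsSLCMultiaffine01 f) (i : Fin 3) :
    IsSLCMultiaffine01 (pderiv8 i f) := by
  obtain ⟨a, b, c, d, -, hb, hc, hd, -, rfl⟩ := hf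
  have he : ∀ j, 0 ≤ (Pi.single i 1 : Fin 3 → ℝ) j := fun j =>
    (Pi.single_nonneg.2 zero_le_one : (0 : Fin 3 → ℝ) ≤ Pi.single i 1) j
  have hd0 := mul_nonneg hd (he 0)
  have hd1 := mul_nonneg hd (he 1)
  refine ⟨_, _, _, _, add_nonneg (mul_nonneg hb (he 0)) (mul_nonneg hc (he 1)), hd1, hd0, le_rfl,
    ?_, pderiv8_multiaffine01 i a b c d⟩
  rw [mul_zero]
  exact mul_nonneg (mul_nonneg zero_le_two hd1) hd0

theorem IsSLCMultiaffine01.concaveOn_log {f : (Fin 3 → ℝ) → ℝ} (hf : IsSLCMultiaffine01 f) :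
    ConcaveOn ℝ {v : Fin 3 → ℝ | ∀ i, 0 < v i} (fun v => log (f v)) := by
  obtain ⟨a, b, c, d, ha, hb, hc, hd, h, rfl⟩ := hf
  exact concaveOn_log_multiaffine01 ha hb hc hd h

noncomputable def exampleDist (S : Finset (Fin 3)) : ℝ :=
  if 2 ∈ S then 0 else if S = ∅ then 1 / 3 else 2 / 9

theorem univ_finset_fin_three : (Finset.univ : Finset (Finset (Fin 3))) =
    {∅, {0}, {1}, {2}, {0, 1}, {0, 2}, {1, 2}, {0, 1, 2}} := by
  decide

theorem sum_exampleDist : ∑ S, exampleDist S = 1 := by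
  norm_num +decide [univ_finset_fin_three, exampleDist, Finset.sum_insert]

theorem genPoly8_exampleDist :
    genPoly8 exampleDist = multiaffine01 (1 / 3) (2 / 9) (2 / 9) (2 / 9) := by
  funext v
  simp +decide only [genPoly8, univ_finset_fin_three, exampleDist, multiaffine01,
    Finset.sum_insert, Finset.mem_insert, Finset.mem_singleton, Finset.sum_singleton,
    Finset.prod_insert, Finset.prod_singleton, Finset.prod_empty, ↓reduceIte]
  ring

theorem stmt_8 :
    ∃ p : Finset (Fin 3) → ℝ,
      (∀ S, 0 ≤ p S) ∧ (∑ S : Finset (Fin 3), p S = 1) ∧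
      (∀ l : List (Fin 3),
        ConcaveOn ℝ {v : Fin 3 → ℝ | ∀ i, 0 < v i}
          (fun v => Real.log ((l.foldr pderiv8 (genPoly8 p)) v))) ∧
      ¬ (∀ S T : Finset (Fin 3), p (S ∪ T) * p (S ∩ T) ≤ p S * p T) := by
  refine ⟨exampleDist, fun S => ?_, sum_exampleDist, fun l => ?_, fun h => ?_⟩
  · unfold exampleDist
    split_ifs <;> norm_num
  · refine IsSLCMultiaffine01.concaveOn_log ?_
    induction l with
    | nil => exact ⟨_, _, _, _, by norm_num, by norm_num, by norm_num, by norm_num, by norm_num,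
        genPoly8_exampleDist⟩
    | cons i l ih => exact ih.pderiv8 i
  · have := h {0} {1}
    norm_num +decide [exampleDist] at this
end
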